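/- Bracket projection is sound for the operational semantics: if a bracketed NMIFC configuration ⟨e, ε⟩ steps in zero or more steps to ⟨e', t⟩, then the bracket-erased configuration ⟨⌊e⌋, ε⟩ steps in zero or more steps to ⟨⌊e'⌋, ⌊t⌋⟩, where ⌊·⌋ removes all brackets (and bracket-specific steps B-Expand, B-DeclL, B-DeclH, B-EndorseL, B-EndorseH are erased, each emitting no trace event). -/
import Mathlib


/-! # NMIFC extended with brackets, and bracket-projection soundness. -/

/-- A FLAM label: confidentiality and integrity components. -/
structure Lbl (B : Type) where
  conf : B
  integ : B

/-- NMIFC types. -/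
inductive Ty (B : Type) where
  | unit : Ty B
  | fn : Ty B → Lbl B → Ty B → Ty B
  | says : Lbl B → Ty B → Ty B

/-- NMIFC expressions (de Bruijn indices), extended with brackets `⟨e⟩_H`
tagged by a high set `H` of labels. -/
inductive Exp (B : Type) where
  | var : ℕ → Exp B
  | unit : Exp B
  | lam : Ty B → Lbl B → Exp B → Exp B
  | app : Exp B → Exp B → Exp B
  | etaE : Lbl B → Exp B → Exp B
  | etaV : Lbl B → Exp B → Exp B
  | bind : Exp B → Exp B → Exp B
  | decl : Exp B → Lbl B → Exp B
  | endo : Exp B → Lbl B → Exp B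
  | brack : Set (Lbl B) → Exp B → Exp B

/-- Values, including bracketed values `⟨v⟩_H`. -/
inductive IsValue {B : Type} : Exp B → Prop
  | unit : IsValue .unit
  | lam {τ : Ty B} {pc : Lbl B} {e : Exp B} : IsValue (.lam τ pc e)
  | etaV {ℓ : Lbl B} {v : Exp B} : IsValue v → IsValue (.etaV ℓ v)
  | brack {H : Set (Lbl B)} {v : Exp B} : IsValue v → IsValue (.brack H v)

/-- Shift free de Bruijn indices `≥ c` up by one. -/
def shiftUp {B : Type} : ℕ → Exp B → Exp B
  | c, .var n => if n < c then .var n else .var (n + 1)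
  | _, .unit => .unit
  | c, .lam τ pc e => .lam τ pc (shiftUp (c + 1) e)
  | c, .app e₁ e₂ => .app (shiftUp c e₁) (shiftUp c e₂)
  | c, .etaE ℓ e => .etaE ℓ (shiftUp c e)
  | c, .etaV ℓ e => .etaV ℓ (shiftUp c e)
  | c, .bind e₁ e₂ => .bind (shiftUp c e₁) (shiftUp (c + 1) e₂)
  | c, .decl e ℓ => .decl (shiftUp c e) ℓ
  | c, .endo e ℓ => .endo (shiftUp c e) ℓ
  | c, .brack H e => .brack H (shiftUp c e)

/-- Substitution `e[x_j ↦ s]`. -/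
def subst {B : Type} : ℕ → Exp B → Exp B → Exp B
  | j, s, .var n => if n < j then .var n else if n = j then s else .var (n - 1)
  | _, _, .unit => .unit
  | j, s, .lam τ pc e => .lam τ pc (subst (j + 1) (shiftUp 0 s) e)
  | j, s, .app e₁ e₂ => .app (subst j s e₁) (subst j s e₂)
  | j, s, .etaE ℓ e => .etaE ℓ (subst j s e)
  | j, s, .etaV ℓ e => .etaV ℓ (subst j s e)
  | j, s, .bind e₁ e₂ => .bind (subst j s e₁) (subst (j + 1) (shiftUp 0 s) e₂)
  | j, s, .decl e ℓ => .decl (subst j s e) ℓ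
  | j, s, .endo e ℓ => .endo (subst j s e) ℓ
  | j, s, .brack H e => .brack H (subst j s e)

/-- Bracket projection `⌊e⌋`: recursively erase all brackets. -/
def erase {B : Type} : Exp B → Exp B
  | .var n => .var n
  | .unit => .unit
  | .lam τ pc e => .lam τ pc (erase e)
  | .app e₁ e₂ => .app (erase e₁) (erase e₂)
  | .etaE ℓ e => .etaE ℓ (erase e)
  | .etaV ℓ e => .etaV ℓ (erase e)
  | .bind e₁ e₂ => .bind (erase e₁) (erase e₂)
  | .decl e ℓ => .decl (erase e) ℓ
  | .endo e ℓ => .endo (erase e) ℓ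
  | .brack _ e => erase e

/-- Trace events. -/
inductive Event (B : Type) where
  | silent : Event B
  | ret : Lbl B → Exp B → Event B
  | down : Bool → Lbl B → Lbl B → Exp B → Event B

/-- Bracket erasure on events. -/
def eraseEv {B : Type} : Event B → Event B
  | .silent => .silent
  | .ret ℓ v => .ret ℓ (erase v)
  | .down π ℓ' ℓ v => .down π ℓ' ℓ (erase v)

/-- Small-step semantics on configurations `⟨e, t⟩`, including the
bracket-manipulation rules B-Expand, B-DeclL, B-DeclH, B-EndorseL, and
B-EndorseH (which emit no trace events), and evaluation under contexts
(brackets are evaluation contexts). -/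
inductive Step {B : Type} : Exp B → List (Event B) → Exp B → List (Event B) → Prop
  | app {τ : Ty B} {pc : Lbl B} {e v : Exp B} {t : List (Event B)} :
      IsValue v →
      Step (.app (.lam τ pc e) v) t (subst 0 v e) (t ++ [.silent])
  | bindM {ℓ : Lbl B} {v e : Exp B} {t : List (Event B)} :
      IsValue v →
      Step (.bind (.etaV ℓ v) e) t (subst 0 v e) (t ++ [.silent])
  | unitM {ℓ : Lbl B} {v : Exp B} {t : List (Event B)} :
      IsValue v →
      Step (.etaE ℓ v) t (.etaV ℓ v) (t ++ [.ret ℓ v])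
  | decl {ℓ' ℓ : Lbl B} {v : Exp B} {t : List (Event B)} :
      IsValue v →
      Step (.decl (.etaV ℓ' v) ℓ) t (.etaV ℓ v) (t ++ [.down true ℓ' ℓ v])
  | endo {ℓ' ℓ : Lbl B} {v : Exp B} {t : List (Event B)} :
      IsValue v →
      Step (.endo (.etaV ℓ' v) ℓ) t (.etaV ℓ v) (t ++ [.down false ℓ' ℓ v])
  -- B-Expand: push brackets out of bind contexts
  | bExpand {H : Set (Lbl B)} {v e : Exp B} {t : List (Event B)} :
      IsValue v →
      Step (.bind (.brack H v) e) t (.brack H (.bind v e)) t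
  -- B-DeclL / B-DeclH
  | bDeclL {H : Set (Lbl B)} {ℓ : Lbl B} {v : Exp B} {t : List (Event B)} :
      IsValue v → ℓ ∉ H →
      Step (.decl (.brack H v) ℓ) t (.decl v ℓ) t
  | bDeclH {H : Set (Lbl B)} {ℓ : Lbl B} {v : Exp B} {t : List (Event B)} :
      IsValue v → ℓ ∈ H →
      Step (.decl (.brack H v) ℓ) t (.brack H (.decl v ℓ)) t
  -- B-EndorseL / B-EndorseH
  | bEndoL {H : Set (Lbl B)} {ℓ : Lbl B} {v : Exp B} {t : List (Event B)} :
      IsValue v → ℓ ∉ H →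
      Step (.endo (.brack H v) ℓ) t (.endo v ℓ) t
  | bEndoH {H : Set (Lbl B)} {ℓ : Lbl B} {v : Exp B} {t : List (Event B)} :
      IsValue v → ℓ ∈ H →
      Step (.endo (.brack H v) ℓ) t (.brack H (.endo v ℓ)) t
  -- evaluation contexts
  | appL {e₁ e₁' e₂ : Exp B} {t t' : List (Event B)} :
      Step e₁ t e₁' t' → Step (.app e₁ e₂) t (.app e₁' e₂) t'
  | appR {v e e' : Exp B} {t t' : List (Event B)} :
      IsValue v → Step e t e' t' → Step (.app v e) t (.app v e') t'
  | etaCtx {ℓ : Lbl B} {e e' : Exp B} {t t' : List (Event B)} :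
      Step e t e' t' → Step (.etaE ℓ e) t (.etaE ℓ e') t'
  | bindCtx {e e' e₂ : Exp B} {t t' : List (Event B)} :
      Step e t e' t' → Step (.bind e e₂) t (.bind e' e₂) t'
  | declCtx {ℓ : Lbl B} {e e' : Exp B} {t t' : List (Event B)} :
      Step e t e' t' → Step (.decl e ℓ) t (.decl e' ℓ) t'
  | endoCtx {ℓ : Lbl B} {e e' : Exp B} {t t' : List (Event B)} :
      Step e t e' t' → Step (.endo e ℓ) t (.endo e' ℓ) t'
  | brackCtx {H : Set (Lbl B)} {e e' : Exp B} {t t' : List (Event B)} :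
      Step e t e' t' → Step (.brack H e) t (.brack H e') t'

/-- Zero-or-more steps. -/
inductive Steps {B : Type} : Exp B → List (Event B) → Exp B → List (Event B) → Prop
  | refl (e : Exp B) (t : List (Event B)) : Steps e t e t
  | tail {e e' e'' : Exp B} {t t' t'' : List (Event B)} :
      Steps e t e' t' → Step e' t' e'' t'' → Steps e t e'' t''

lemma erase_shiftUp {B : Type} (c : ℕ) (e : Exp B) :
    erase (shiftUp c e) = shiftUp c (erase e) := by
  induction e generalizing c <;> simp [shiftUp, erase, *]
  split <;> simp [erase]

lemma erase_subst {B : Type} (j : ℕ) (s e : Exp B) :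
    erase (subst j s e) = subst j (erase s) (erase e) := by
  induction e generalizing j s <;> simp [subst, erase, erase_shiftUp, *]
  split
  · simp [erase]
  · split <;> simp [erase]

lemma isValue_erase {B : Type} {v : Exp B} (h : IsValue v) : IsValue (erase v) := by
  induction h with
  | unit => exact IsValue.unit
  | lam => exact IsValue.lam
  | etaV _ ih => exact IsValue.etaV ih
  | brack _ ih => simpa [erase] using ih

lemma step_erase {B : Type} {e e' : Exp B} {t t' : List (Event B)}
    (h : Step e t e' t') :
    (erase e = erase e' ∧ t = t') ∨
      Step (erase e) (t.map eraseEv) (erase e') (t'.map eraseEv) := by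
  induction h with
  | app hv => exact Or.inr (by simpa [erase, erase_subst, eraseEv] using Step.app (isValue_erase hv))
  | bindM hv => exact Or.inr (by simpa [erase, erase_subst, eraseEv] using Step.bindM (isValue_erase hv))
  | unitM hv => exact Or.inr (by simpa [erase, eraseEv] using Step.unitM (isValue_erase hv))
  | decl hv => exact Or.inr (by simpa [erase, eraseEv] using Step.decl (isValue_erase hv))
  | endo hv => exact Or.inr (by simpa [erase, eraseEv] using Step.endo (isValue_erase hv))
  | bExpand hv => exact Or.inl ⟨by simp [erase], rfl⟩
  | bDeclL hv _ => exact Or.inl ⟨by simp [erase], rfl⟩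
  | bDeclH hv _ => exact Or.inl ⟨by simp [erase], rfl⟩
  | bEndoL hv _ => exact Or.inl ⟨by simp [erase], rfl⟩
  | bEndoH hv _ => exact Or.inl ⟨by simp [erase], rfl⟩
  | appL _ ih =>
    rcases ih with ⟨h1, h2⟩ | hs
    · exact Or.inl ⟨by simp [erase, h1], h2⟩
    · exact Or.inr (by simpa [erase] using Step.appL hs)
  | appR hv _ ih =>
    rcases ih with ⟨h1, h2⟩ | hs
    · exact Or.inl ⟨by simp [erase, h1], h2⟩
    · exact Or.inr (by simpa [erase] using Step.appR (isValue_erase hv) hs)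
  | etaCtx _ ih =>
    rcases ih with ⟨h1, h2⟩ | hs
    · exact Or.inl ⟨by simp [erase, h1], h2⟩
    · exact Or.inr (by simpa [erase] using Step.etaCtx hs)
  | bindCtx _ ih =>
    rcases ih with ⟨h1, h2⟩ | hs
    · exact Or.inl ⟨by simp [erase, h1], h2⟩
    · exact Or.inr (by simpa [erase] using Step.bindCtx hs)
  | declCtx _ ih =>
    rcases ih with ⟨h1, h2⟩ | hs
    · exact Or.inl ⟨by simp [erase, h1], h2⟩
    · exact Or.inr (by simpa [erase] using Step.declCtx hs)
  | endoCtx _ ih =>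
    rcases ih with ⟨h1, h2⟩ | hs
    · exact Or.inl ⟨by simp [erase, h1], h2⟩
    · exact Or.inr (by simpa [erase] using Step.endoCtx hs)
  | brackCtx _ ih =>
    rcases ih with ⟨h1, h2⟩ | hs
    · exact Or.inl ⟨by simp [erase, h1], h2⟩
    · exact Or.inr (by simpa [erase] using hs)

lemma steps_erase {B : Type} {e e' : Exp B} {t t' : List (Event B)}
    (h : Steps e t e' t') :
    Steps (erase e) (t.map eraseEv) (erase e') (t'.map eraseEv) := by
  induction h with
  | refl => exact Steps.refl _ _
  | tail _ hstep ih =>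
    rcases step_erase hstep with ⟨h1, h2⟩ | hs
    · rwa [← h1, ← h2]
    · exact Steps.tail ih hs

/-- Bracket-projection soundness: if a bracketed configuration `⟨e, ε⟩` steps
in zero or more steps to `⟨e', t⟩`, then the bracket-erased configuration
`⟨⌊e⌋, ε⟩` steps in zero or more steps to `⟨⌊e'⌋, ⌊t⌋⟩`. -/
theorem bracket_projection_sound {B : Type} {e e' : Exp B} {t : List (Event B)}
    (h : Steps e [] e' t) :
    Steps (erase e) [] (erase e') (t.map eraseEv) := by
  simpa using steps_erase h
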